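/- arXiv:2003.00597 — 2 statements merged into one kernel-verified Lean document; each statement's English description precedes it below -/
import Mathlib

section
/- Let T be a complete first-order theory, A a set of parameters, and λ a regular cardinal with λ > |T| + |A|. If some consistent formula φ(x;a) λ-shreds over A, then T has the independence property. -/
open FirstOrder FirstOrder.Language Cardinal Set

universe u

namespace ShredPaper

variable {L : FirstOrder.Language.{u, u}} {M : Type u} [L.Structure M]

/-- The restriction of the sequence `b` of `γ`-tuples from `M` (indexed by ordinals)
to the indices lying in `S` is an indiscernible sequence over the parameter set `A`. -/
def IsIndiscOn (A : Set M) {γ : Type*} (S : Set Ordinal.{u}) (b : Ordinal.{u} → γ → M) : Prop :=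
  ∀ (n : ℕ) (φ : L.Formula ((Fin n × γ) ⊕ ↥A)) (s t : Fin n → Ordinal.{u}),
    StrictMono s → StrictMono t → (∀ i, s i ∈ S) → (∀ i, t i ∈ S) →
    (φ.Realize (Sum.elim (fun p => b (s p.1) p.2) Subtype.val) ↔
      φ.Realize (Sum.elim (fun p => b (t p.1) p.2) Subtype.val))

/-- `b` (restricted to indices `< lam.ord`) witnesses that `φ(x; a)` `lam`-shreds over `A`:
it is an `A`-indiscernible sequence such that for no `α < lam` and no realization `c` of
`φ(x; a)` is the end segment `b ↾ [α, lam)` indiscernible over `A ∪ c`. -/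
def IsShredWitness (lam : Cardinal.{u}) {γx γa γb : Type*} (φ : L.Formula (γx ⊕ γa))
    (a : γa → M) (A : Set M) (b : Ordinal.{u} → γb → M) : Prop :=
  IsIndiscOn (L := L) A (Set.Iio lam.ord) b ∧
    ∀ α < lam.ord, ∀ c : γx → M, φ.Realize (Sum.elim c a) →
      ¬ IsIndiscOn (L := L) (A ∪ Set.range c) (Set.Ico α lam.ord) b

/-- `φ(x; a)` `lam`-shreds over `A`. -/
def LamShreds (lam : Cardinal.{u}) {γx γa : Type*} (φ : L.Formula (γx ⊕ γa))
    (a : γa → M) (A : Set M) : Prop :=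
  ∃ (γb : Type u) (b : Ordinal.{u} → γb → M), IsShredWitness lam φ a A b

/-- The cardinal `(|T| + |A|)⁺`. -/
noncomputable def shredLam (L : FirstOrder.Language.{u, u}) {M : Type u} (A : Set M) : Cardinal.{u} :=
  Order.succ (L.card + ℵ₀ + #A)

/-- `φ(x; a)` shreds over `A`, i.e. `(|T| + |A|)⁺`-shreds over `A`. -/
def Shreds {γx γa : Type*} (φ : L.Formula (γx ⊕ γa)) (a : γa → M) (A : Set M) : Prop :=
  LamShreds (shredLam L A) φ a A

/-- `φ(x; a)` explicitly `lam`-shreds over `A`: there are `n`, an `A`-indiscernible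
sequence `b` of length `lam`, increasing maps `η l : n → 2n` and formulas
`ψ l (x; y₀, …, y_{n-1}; a'_l)` with parameters from `A` such that for every `δ < lam`
divisible by `2n`, `φ(x;a)` implies the disjunction over `l < k` of
`ψ l (x; b_δ, …, b_{δ+n-1}) ↔ ¬ ψ l (x; b_{δ+η l 0}, …, b_{δ + η l (n-1)})`. -/
def ExplLamShreds (lam : Cardinal.{u}) {γx γa : Type*} (φ : L.Formula (γx ⊕ γa))
    (a : γa → M) (A : Set M) : Prop :=
  ∃ (γb : Type u) (n k : ℕ) (b : Ordinal.{u} → γb → M)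
    (η : Fin k → Fin n → Fin (2 * n)) (ψ : Fin k → L.Formula (γx ⊕ ((Fin n × γb) ⊕ ↥A))),
    IsIndiscOn (L := L) A (Set.Iio lam.ord) b ∧ (∀ l, StrictMono (η l)) ∧
    ∀ δ < lam.ord, ((2 * n : ℕ) : Ordinal.{u}) ∣ δ →
      ∀ c : γx → M, φ.Realize (Sum.elim c a) →
        ∃ l : Fin k,
          ¬ ((ψ l).Realize
              (Sum.elim c (Sum.elim (fun p => b (δ + ((p.1 : ℕ) : Ordinal.{u})) p.2) Subtype.val)) ↔
            (ψ l).Realize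
              (Sum.elim c (Sum.elim (fun p => b (δ + (((η l p.1 : Fin (2 * n)) : ℕ) : Ordinal.{u})) p.2) Subtype.val)))

/-- A set of formulas over parameters `B` in the variables `γ` is finitely satisfiable in `M`. -/
def FinSat (B : Set M) {γ : Type*} (p : Set (L.Formula (γ ⊕ ↥B))) : Prop :=
  ∀ F : Finset (L.Formula (γ ⊕ ↥B)), ↑F ⊆ p →
    ∃ c : γ → M, ∀ φ ∈ F, φ.Realize (Sum.elim c Subtype.val)

/-- `p` is a complete `m`-type over the parameter set `B` (working inside the monster `M`,
consistency is finite satisfiability in `M`). -/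
def IsCompleteType (B : Set M) (m : ℕ) (p : Set (L.Formula (Fin m ⊕ ↥B))) : Prop :=
  FinSat B p ∧ ∀ φ : L.Formula (Fin m ⊕ ↥B), φ ∈ p ∨ φ.not ∈ p

/-- The type `p` over `B` shreds over `A`: it implies a formula which shreds over `A`. -/
def TypeShreds {m : ℕ} (B : Set M) (p : Set (L.Formula (Fin m ⊕ ↥B))) (A : Set M) : Prop :=
  ∃ (γa : Type u) (χ : L.Formula (Fin m ⊕ γa)) (a : γa → M)
    (F : Finset (L.Formula (Fin m ⊕ ↥B))),
    ↑F ⊆ p ∧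
    (∀ c : Fin m → M, (∀ φ ∈ F, φ.Realize (Sum.elim c Subtype.val)) → χ.Realize (Sum.elim c a)) ∧
    Shreds (M := M) χ a A

/-- The type `p` over `B` shreds over `A ⊆ B` with a built-in witness: it implies a formula
which shreds over `A`, with a witnessing `A`-indiscernible sequence contained in `B`. -/
def TypeShredsBuiltIn {m : ℕ} (B : Set M) (p : Set (L.Formula (Fin m ⊕ ↥B))) (A : Set M) :
    Prop :=
  A ⊆ B ∧
  ∃ (γa γb : Type u) (χ : L.Formula (Fin m ⊕ γa)) (a : γa → M)
    (F : Finset (L.Formula (Fin m ⊕ ↥B))) (b : Ordinal.{u} → γb → M),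
    ↑F ⊆ p ∧
    (∀ c : Fin m → M, (∀ φ ∈ F, φ.Realize (Sum.elim c Subtype.val)) → χ.Realize (Sum.elim c a)) ∧
    (∀ β < (shredLam L A).ord, ∀ j, b β j ∈ B) ∧
    IsShredWitness (M := M) (shredLam L A) χ a A b

/-- Restriction of a type over `B` to a type over `B' ⊆ B`. -/
def restrictType {B B' : Set M} (h : B' ⊆ B) {m : ℕ}
    (p : Set (L.Formula (Fin m ⊕ ↥B))) : Set (L.Formula (Fin m ⊕ ↥B')) :=
  {φ | Formula.relabel (Sum.map id (Set.inclusion h)) φ ∈ p}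

/-- There are an increasing continuous chain of (elementary sub)models `⟨M_i : i ≤ κ⟩` of the
monster and a complete `m`-type `p` over `M_κ = ⋃_{i<κ} M_i` such that `p ↾ M_{i+1}` shreds
over `M_i` with a built-in witness, for every `i < κ`. -/
def HasShreddingChain (L : FirstOrder.Language.{u, u}) (M : Type u) [L.Structure M] (m : ℕ)
    (κ : Cardinal.{u}) : Prop :=
  ∃ (Mo : Ordinal.{u} → L.ElementarySubstructure M)
    (p : Set (L.Formula (Fin m ⊕ ↥(Mo κ.ord : Set M)))),
    (∀ i j : Ordinal.{u}, i ≤ j → j ≤ κ.ord → (Mo i : Set M) ⊆ (Mo j : Set M)) ∧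
    (∀ δ ≤ κ.ord, Order.IsSuccLimit δ →
      (Mo δ : Set M) = ⋃ (i : Ordinal.{u}) (_ : i < δ), (Mo i : Set M)) ∧
    IsCompleteType (Mo κ.ord : Set M) m p ∧
    ∀ i < κ.ord, ∀ h : (Mo (i + 1) : Set M) ⊆ (Mo κ.ord : Set M),
      TypeShredsBuiltIn (Mo (i + 1) : Set M) (restrictType h p) (Mo i : Set M)

/-- `κ` is a regular cardinal such that there is no shredding chain (for `m`-types) of
length `κ`; `κ^m_shred(T)` is the least such cardinal (`∞` if there is none). -/
def ShredBoundedAt (L : FirstOrder.Language.{u, u}) (M : Type u) [L.Structure M] (m : ℕ)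
    (κ : Cardinal.{u}) : Prop :=
  κ.IsRegular ∧ ¬ HasShreddingChain L M m κ

/-- `κ^m_shred(T)` (meaningful only when the defining set is nonempty, i.e. when it is `< ∞`). -/
noncomputable def kappaShredM (L : FirstOrder.Language.{u, u}) (M : Type u) [L.Structure M] (m : ℕ) :
    Cardinal.{u} :=
  sInf {κ : Cardinal.{u} | ShredBoundedAt L M m κ}

/-- `T` is unshreddable: `κ^m_shred(T) < ∞` for every `m`, i.e. `κ_shred(T) < ∞`. -/
def Unshreddable (L : FirstOrder.Language.{u, u}) (M : Type u) [L.Structure M] : Prop :=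
  ∀ m : ℕ, {κ : Cardinal.{u} | ShredBoundedAt L M m κ}.Nonempty

/-- `κ_shred(T) = sup_m κ^m_shred(T)`. -/
noncomputable def kappaShred (L : FirstOrder.Language.{u, u}) (M : Type u) [L.Structure M] : Cardinal.{u} :=
  ⨆ m : ℕ, kappaShredM L M m

/-- `M` is a monster model (for its complete theory): it is `κbar`-saturated and strongly
`κbar`-homogeneous. -/
structure IsMonster (L : FirstOrder.Language.{u, u}) (M : Type u) [L.Structure M] (κbar : Cardinal.{u}) :
    Prop where
  saturated : ∀ (γ : Type u) (A : Set M) (p : Set (L.Formula (γ ⊕ ↥A))),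
    #γ < κbar → #A < κbar → FinSat A p →
    ∃ c : γ → M, ∀ φ ∈ p, φ.Realize (Sum.elim c Subtype.val)
  homogeneous : ∀ (A : Set M) (f : ↥A → M), #A < κbar →
    (∀ (n : ℕ) (φ : L.Formula (Fin n)) (v : Fin n → ↥A),
      φ.Realize (fun i => ((v i : M))) ↔ φ.Realize (fun i => f (v i))) →
    ∃ σ : M ≃[L] M, ∀ x : ↥A, σ x = f x

/-- The formula `θ(x; y)` has the independence property (witnessed in `M`). -/
def HasIP {γ δ : Type*} (θ : L.Formula (γ ⊕ δ)) : Prop :=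
  ∀ n : ℕ, ∃ (av : Fin n → γ → M) (bv : Finset (Fin n) → δ → M),
    ∀ (i : Fin n) (w : Finset (Fin n)),
      θ.Realize (Sum.elim (av i) (bv w)) ↔ i ∈ w

/-- The theory of `M` has the independence property. -/
def HasIPTheory (L : FirstOrder.Language.{u, u}) (M : Type u) [L.Structure M] : Prop :=
  ∃ (γ δ : Type u) (θ : L.Formula (γ ⊕ δ)), HasIP (M := M) θ

/-- `φ(x; a)` divides over `A`: there is an `A`-indiscernible sequence `⟨a_i : i < ω⟩`
starting with `a` such that `{φ(x; a_i) : i < ω}` is inconsistent. -/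
def Divides {γx γa : Type*} (φ : L.Formula (γx ⊕ γa)) (a : γa → M) (A : Set M) : Prop :=
  ∃ b : Ordinal.{u} → γa → M,
    b 0 = a ∧ IsIndiscOn (L := L) A (Set.Iio (Cardinal.aleph0.{u}).ord) b ∧
    ∃ F : Finset Ordinal.{u}, (∀ i ∈ F, i < (Cardinal.aleph0.{u}).ord) ∧
      ¬ ∃ c : γx → M, ∀ i ∈ F, φ.Realize (Sum.elim c (b i))

/-- `φ(x; a)` forks over `A`: it implies a finite disjunction of formulas, each of which
divides over `A`. -/
def Forks {γx γa : Type*} (φ : L.Formula (γx ⊕ γa)) (a : γa → M) (A : Set M) : Prop :=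
  ∃ (k : ℕ) (γ : Fin k → Type u) (ψ : ∀ i, L.Formula (γx ⊕ γ i)) (cv : ∀ i, γ i → M),
    (∀ i, Divides (ψ i) (cv i) A) ∧
    ∀ d : γx → M, φ.Realize (Sum.elim d a) → ∃ i, (ψ i).Realize (Sum.elim d (cv i))

/-- The type `p` over `B` forks over `A`: it implies a formula which forks over `A`. -/
def TypeForks {m : ℕ} (B : Set M) (p : Set (L.Formula (Fin m ⊕ ↥B))) (A : Set M) : Prop :=
  ∃ (γa : Type u) (χ : L.Formula (Fin m ⊕ γa)) (a : γa → M)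
    (F : Finset (L.Formula (Fin m ⊕ ↥B))),
    ↑F ⊆ p ∧
    (∀ c : Fin m → M, (∀ φ ∈ F, φ.Realize (Sum.elim c Subtype.val)) → χ.Realize (Sum.elim c a)) ∧
    Forks (M := M) χ a A

/-- `κ` witnesses simplicity of the theory of `M`: every complete type over any set `A`
does not fork over some subset of `A` of size `< κ`.  `T` is simple iff some `κ` is a
simplicity bound; `κ_r(T)` is the least regular simplicity bound. -/
def IsSimpleBound (L : FirstOrder.Language.{u, u}) (M : Type u) [L.Structure M] (κ : Cardinal.{u}) : Prop :=
  ∀ (m : ℕ) (A : Set M) (p : Set (L.Formula (Fin m ⊕ ↥A))), IsCompleteType A m p →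
    ∃ B : Set M, B ⊆ A ∧ #B < κ ∧ ¬ TypeForks A p B

/-- The set `N` (underlying an elementary submodel of the monster `M`) is `μ`-saturated. -/
def SetSaturated (N : Set M) (μ : Cardinal.{u}) : Prop :=
  ∀ A : Set M, A ⊆ N → #A < μ →
    ∀ p : Set (L.Formula (Fin 1 ⊕ ↥A)), FinSat (L := L) A p →
      ∃ c ∈ N, ∀ φ ∈ p, φ.Realize (Sum.elim (fun _ => c) Subtype.val)

/-- The structure `N` is a `μ`-saturated model. -/
def IsSaturatedModel (L : FirstOrder.Language.{u, u}) (N : Type u) [L.Structure N] (μ : Cardinal.{u}) :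
    Prop :=
  ∀ (k : ℕ) (A : Set N) (p : Set (L.Formula (Fin k ⊕ ↥A))), #A < μ → FinSat (L := L) A p →
    ∃ c : Fin k → N, ∀ φ ∈ p, φ.Realize (Sum.elim c Subtype.val)

/-- The formula `θ(x; y)` has SOP₁ (witnessed in `M`). -/
def HasSOP1 {γ δ : Type*} (θ : L.Formula (γ ⊕ δ)) : Prop :=
  ∃ a : List Bool → δ → M,
    (∀ η : ℕ → Bool, ∀ K : ℕ, ∃ c : γ → M,
      ∀ k ≤ K, θ.Realize (Sum.elim c (a (List.ofFn fun i : Fin k => η i)))) ∧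
    (∀ ρ σ : List Bool,
      ¬ ∃ c : γ → M, θ.Realize (Sum.elim c (a (ρ ++ (false :: σ)))) ∧
        θ.Realize (Sum.elim c (a (ρ ++ [true]))))

/-- The theory of `M` has TP₂. -/
def HasTP2 (L : FirstOrder.Language.{u, u}) (M : Type u) [L.Structure M] : Prop :=
  ∃ (γ δ : Type u) (θ : L.Formula (γ ⊕ δ)) (k : ℕ) (a : ℕ → ℕ → δ → M),
    (∀ f : ℕ → ℕ, ∀ F : Finset ℕ, ∃ c : γ → M, ∀ i ∈ F, θ.Realize (Sum.elim c (a i (f i)))) ∧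
    ∀ i : ℕ, ∀ s : Finset ℕ, s.card = k → ¬ ∃ c : γ → M, ∀ j ∈ s, θ.Realize (Sum.elim c (a i j))

/-- The theory of `M` has SOP_n. -/
def HasSOPn (L : FirstOrder.Language.{u, u}) (M : Type u) [L.Structure M] (n : ℕ) : Prop :=
  ∃ (δ : Type u) (θ : L.Formula (δ ⊕ δ)) (a : ℕ → δ → M),
    (∀ i j : ℕ, θ.Realize (Sum.elim (a i) (a j)) ↔ i < j) ∧
    ¬ ∃ c : Fin n → δ → M, ∀ i : Fin n, θ.Realize (Sum.elim (c i) (c (i + ⟨1 % n, Nat.mod_lt 1 (Fin.pos i)⟩)))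

/- ===== Auxiliary machinery for the shredding ⇒ IP theorem ===== -/

/-- Realization of a formula only depends on the values of its free variables. -/
lemma realize_congr_vars {α : Type*} [DecidableEq α] {φ : L.Formula α} {v w : α → M}
    (h : ∀ x ∈ φ.freeVarFinset, v x = w x) : φ.Realize v ↔ φ.Realize w := by
  have hsub : ↑φ.freeVarFinset ⊆ (↑φ.freeVarFinset : Set α) := subset_rfl
  have h1 := BoundedFormula.realize_restrictFreeVar' (M := M) hsub (v := v) (xs := default)
  have h2 := BoundedFormula.realize_restrictFreeVar' (M := M) hsub (v := w) (xs := default)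
  have he : (v ∘ (Subtype.val : (↑φ.freeVarFinset : Set α) → α)) = (w ∘ Subtype.val) := by
    funext x; exact h x.1 (by exact_mod_cast x.2)
  unfold Formula.Realize
  rw [← h1, ← h2, he]

/-- Extract the finitely many `γb`-coordinates used by a formula whose variables are
`(Fin n × γb) ⊕ P`, re-expressing it as a formula with variables `(ℕ × ℕ) ⊕ P`. -/
lemma extract {γb P : Type u} (g₀ : γb) {n : ℕ} (χ : L.Formula ((Fin n × γb) ⊕ P)) :
    ∃ (ψ : L.Formula ((ℕ × ℕ) ⊕ P)) (g : ℕ → γb),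
      ∀ (w : Fin n → γb → M) (val : P → M) (w' : ℕ → Fin n) (_hw' : ∀ p : Fin n, w' p = p),
        ψ.Realize (Sum.elim (fun pq => w (w' pq.1) (g pq.2)) val) ↔
          χ.Realize (Sum.elim (fun p => w p.1 p.2) val) := by
  classical
  set l : List γb := χ.freeVarFinset.toList.map (Sum.elim Prod.snd (fun _ => g₀)) with hl
  set g : ℕ → γb := fun q => l.getD q g₀ with hg
  set idx : γb → ℕ := fun x => if h : ∃ q, g q = x then h.choose else 0 with hidx
  set ρ : ((Fin n × γb) ⊕ P) → ((ℕ × ℕ) ⊕ P) :=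
    Sum.elim (fun p => Sum.inl ((p.1 : ℕ), idx p.2)) Sum.inr with hρ
  refine ⟨χ.relabel ρ, g, fun w val w' hw' => ?_⟩
  rw [Formula.realize_relabel]
  apply realize_congr_vars
  intro x hx
  cases x with
  | inr e => rfl
  | inl p =>
    have hmem : p.2 ∈ l := by
      rw [hl]
      exact List.mem_map.2 ⟨Sum.inl p, by simpa using hx, rfl⟩
    have hex : ∃ q, g q = p.2 := by
      obtain ⟨i, hil, hi⟩ := List.mem_iff_getElem.1 hmem
      exact ⟨i, by rw [hg]; simp [List.getD_eq_getElem?_getD, List.getElem?_eq_getElem hil, hi]⟩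
    have hgidx : g (idx p.2) = p.2 := by
      rw [hidx]; simp only [hex, dif_pos]; exact hex.choose_spec
    show w (w' p.1) (g (idx p.2)) = w p.1 p.2
    rw [hw', hgidx]

/-- Transfer truth of a (finitary) formula between two increasing selections from an
`A`-indiscernible sequence. -/
lemma indisc_transfer {γb : Type u} {A : Set M} {S : Set Ordinal.{u}} {b : Ordinal.{u} → γb → M}
    (hind : IsIndiscOn (L := L) A S b) {K k : ℕ} {u₁ u₂ : Fin K → Ordinal.{u}}
    (h₁ : StrictMono u₁) (h₂ : StrictMono u₂) (m₁ : ∀ i, u₁ i ∈ S) (m₂ : ∀ i, u₂ i ∈ S)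
    (χ : L.Formula (Fin k)) (h : Fin k → ((Fin K × γb) ⊕ ↥A)) :
    χ.Realize ((Sum.elim (fun p : Fin K × γb => b (u₁ p.1) p.2) Subtype.val) ∘ h) ↔
      χ.Realize ((Sum.elim (fun p : Fin K × γb => b (u₂ p.1) p.2) Subtype.val) ∘ h) := by
  have := hind K (χ.relabel h) u₁ u₂ h₁ h₂ m₁ m₂
  rwa [Formula.realize_relabel, Formula.realize_relabel] at this

/-- Cardinality bound for formulas over a small variable type. -/
lemma formula_card_lt {V : Type u} {lam : Cardinal.{u}} (hreg : lam.IsRegular)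
    (haleph : ℵ₀ < lam) (hV : #V < lam) (hL : L.card < lam) : #(L.Formula V) < lam := by
  have hinj : #(L.Formula V) ≤ #(Σ k, L.BoundedFormula V k) :=
    mk_le_of_injective (f := fun ψ => ⟨0, ψ⟩) (fun x y h => by
      simpa using h)
  have hcard := BoundedFormula.card_le (L := L) (α := V)
  refine lt_of_le_of_lt (hinj.trans hcard) ?_
  rw [Cardinal.lift_id, Cardinal.lift_id]
  exact max_lt haleph (add_lt_of_lt hreg.aleph0_le hV hL)

/-- Block-witness data for the pigeonhole argument: at `α` there are two increasing
(clamped) tuples `σ`, `τ` from `[α, lam.ord)` on which `ψ` (with the `γb`-coordinates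
selected by `g`) differs in truth value. -/
def BlockAt (lam : Cardinal.{u}) {γb P : Type u} (b : Ordinal.{u} → γb → M)
    (valP : P → M) (α : Ordinal.{u}) (n : ℕ) (ψ : L.Formula ((ℕ × ℕ) ⊕ P)) : Prop :=
  ∃ (σ τ : ℕ → Ordinal.{u}) (g : ℕ → γb),
    (∀ p q, p < q → q ≤ n → σ p < σ q) ∧ (∀ p, n ≤ p → σ p = σ n) ∧
      (∀ p, α ≤ σ p ∧ σ p < lam.ord) ∧
    (∀ p q, p < q → q ≤ n → τ p < τ q) ∧ (∀ p, n ≤ p → τ p = τ n) ∧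
      (∀ p, α ≤ τ p ∧ τ p < lam.ord) ∧
    ψ.Realize (Sum.elim (fun pq => b (σ pq.1) (g pq.2)) valP) ∧
    ¬ ψ.Realize (Sum.elim (fun pq => b (τ pq.1) (g pq.2)) valP)

lemma blockAt_def (lam : Cardinal.{u}) {γb P : Type u} (b : Ordinal.{u} → γb → M)
    (valP : P → M) (α : Ordinal.{u}) (n : ℕ) (ψ : L.Formula ((ℕ × ℕ) ⊕ P)) :
    BlockAt (M := M) lam b valP α n ψ ↔
      ∃ (σ τ : ℕ → Ordinal.{u}) (g : ℕ → γb),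
        (∀ p q, p < q → q ≤ n → σ p < σ q) ∧ (∀ p, n ≤ p → σ p = σ n) ∧
          (∀ p, α ≤ σ p ∧ σ p < lam.ord) ∧
        (∀ p q, p < q → q ≤ n → τ p < τ q) ∧ (∀ p, n ≤ p → τ p = τ n) ∧
          (∀ p, α ≤ τ p ∧ τ p < lam.ord) ∧
        ψ.Realize (Sum.elim (fun pq => b (σ pq.1) (g pq.2)) valP) ∧
        ¬ ψ.Realize (Sum.elim (fun pq => b (τ pq.1) (g pq.2)) valP) := Iff.rfl

/-- From failure of end-segment indiscernibility we can produce block-witness data. -/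
lemma blockAt_of_not_indisc {γb : Type u} {B : Set M} {lam : Cardinal.{u}}
    {b : Ordinal.{u} → γb → M} (g₀ : γb) {α : Ordinal.{u}}
    (hfail : ¬ IsIndiscOn (L := L) B (Set.Ico α lam.ord) b) :
    ∃ (n : ℕ) (ψ : L.Formula ((ℕ × ℕ) ⊕ ↥B)),
      BlockAt (M := M) lam b Subtype.val α n ψ := by
  classical
  unfold IsIndiscOn at hfail
  push_neg at hfail
  obtain ⟨k, χ, s, t, hs, ht, hsm, htm, hne⟩ := hfail
  rcases k with - | k'
  · have heqf : (fun p : Fin 0 × γb => b (s p.1) p.2) = (fun p => b (t p.1) p.2) :=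
      funext fun p => p.1.elim0
    rcases hne with ⟨h1, h2⟩ | ⟨h1, h2⟩
    · rw [heqf] at h1; exact absurd h1 h2
    · rw [heqf] at h1; exact absurd h2 h1
  · -- normalize the orientation
    have key : ∃ s' t' : Fin (k' + 1) → Ordinal.{u}, StrictMono s' ∧ StrictMono t' ∧
        (∀ i, s' i ∈ Set.Ico α lam.ord) ∧ (∀ i, t' i ∈ Set.Ico α lam.ord) ∧
        χ.Realize (Sum.elim (fun p => b (s' p.1) p.2) Subtype.val) ∧
        ¬ χ.Realize (Sum.elim (fun p => b (t' p.1) p.2) Subtype.val) := by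
      rcases hne with ⟨hX, hY⟩ | ⟨hX, hY⟩
      · exact ⟨s, t, hs, ht, hsm, htm, hX, hY⟩
      · exact ⟨t, s, ht, hs, htm, hsm, hY, hX⟩
    obtain ⟨s', t', hs', ht', hsm', htm', hXT, hXF⟩ := key
    obtain ⟨ψ, g, hψ⟩ := extract (M := M) g₀ χ
    set w' : ℕ → Fin (k' + 1) := fun p => ⟨min p k', by omega⟩ with hw'def
    have hw' : ∀ p : Fin (k' + 1), w' (p : ℕ) = p := by
      intro p; rw [hw'def]; exact Fin.ext (by simp [Nat.min_eq_left (Nat.lt_succ_iff.1 p.isLt)])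
    refine ⟨k', ψ, fun p => s' (w' p), fun p => t' (w' p), g, ?_, ?_, ?_, ?_, ?_, ?_, ?_, ?_⟩
    · intro p q hpq hq
      exact hs' (by simp [hw'def, Fin.lt_def, Nat.min_eq_left hq,
        Nat.min_eq_left (Nat.le_of_lt (lt_of_lt_of_le hpq hq)), hpq])
    · intro p hp; rw [hw'def]; simp [Nat.min_eq_right hp]
    · intro p; exact ⟨(hsm' _).1, (hsm' _).2⟩
    · intro p q hpq hq
      exact ht' (by simp [hw'def, Fin.lt_def, Nat.min_eq_left hq,
        Nat.min_eq_left (Nat.le_of_lt (lt_of_lt_of_le hpq hq)), hpq])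
    · intro p hp; rw [hw'def]; simp [Nat.min_eq_right hp]
    · intro p; exact ⟨(htm' _).1, (htm' _).2⟩
    · exact (hψ (fun p gg => b (s' p) gg) Subtype.val w' hw').2 hXT
    · intro hcon
      exact hXF ((hψ (fun p gg => b (t' p) gg) Subtype.val w' hw').1 hcon)
/-- if `λ` is regular, `λ > |T| + |A|`, and some consistent formula
`φ(x; a)` `λ`-shreds over `A`, then `T` has the independence property. -/
theorem shredding_implies_IP
    {L : FirstOrder.Language.{u, u}} {M : Type u} [L.Structure M]
    (κbar : Cardinal.{u}) (hM : IsMonster L M κbar)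
    {γx γa : Type u} (φ : L.Formula (γx ⊕ γa)) (a : γa → M) (A : Set M)
    (lam : Cardinal.{u}) (hreg : lam.IsRegular) (hbig : L.card + ℵ₀ + #A < lam)
    (hlam : lam < κbar)
    (hcons : ∃ c : γx → M, φ.Realize (Sum.elim c a))
    (hshred : LamShreds lam φ a A) :
    HasIPTheory L M := by


  classical
  obtain ⟨γb, b, hb⟩ := hshred
  obtain ⟨hb1, hb2⟩ := hb
  -- basic cardinal facts
  have haleph : ℵ₀ < lam :=
    lt_of_le_of_lt ((self_le_add_left ℵ₀ L.card).trans (self_le_add_right _ _)) hbig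
  have hAlt : #A < lam := lt_of_le_of_lt (self_le_add_left _ _) hbig
  have hLlt : L.card < lam :=
    lt_of_le_of_lt ((self_le_add_right L.card ℵ₀).trans (self_le_add_right _ _)) hbig
  have hlimit : Order.IsSuccLimit lam.ord := Cardinal.isSuccLimit_ord hreg.aleph0_le
  have h0 : (0 : Ordinal.{u}) < lam.ord := hlimit.pos
  -- γb is nonempty (otherwise the shredding witness is trivially contradictory)
  by_cases hγb : Nonempty γb
  swap
  · obtain ⟨c₀, hc₀⟩ := hcons
    refine absurd ?_ (hb2 0 h0 c₀ hc₀)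
    intro k χ s t _ _ _ _
    have : (fun p : Fin k × γb => b (s p.1) p.2) = (fun p => b (t p.1) p.2) :=
      funext fun p => absurd ⟨p.2⟩ hγb
    rw [this]
  obtain ⟨g₀⟩ := hγb
  -- find a realization of φ with finite range
  have hcfin : ∃ c : γx → M, φ.Realize (Sum.elim c a) ∧ (Set.range c).Finite := by
    obtain ⟨c₀, hc₀⟩ := hcons
    by_cases hγx : Nonempty γx
    · obtain ⟨j₀⟩ := hγx
      refine ⟨fun j => if Sum.inl j ∈ φ.freeVarFinset then c₀ j else c₀ j₀, ?_, ?_⟩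
      · refine (realize_congr_vars ?_).2 hc₀
        intro x hx
        cases x with
        | inl j => simp [hx]
        | inr _ => rfl
      · apply Set.Finite.subset (Set.finite_range (fun x : Option ↥φ.freeVarFinset => match x with
          | none => c₀ j₀
          | some y => Sum.elim c₀ (fun _ => c₀ j₀) y.1))
        rintro - ⟨j, rfl⟩
        by_cases hj : Sum.inl j ∈ φ.freeVarFinset
        · exact ⟨some ⟨Sum.inl j, hj⟩, by simp [hj]⟩
        · exact ⟨none, by simp [hj]⟩
    · exact ⟨c₀, hc₀, Set.Finite.subset (Set.finite_empty) (by
        rintro - ⟨j, rfl⟩; exact absurd ⟨j⟩ hγx)⟩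
  obtain ⟨c, hc, hcran⟩ := hcfin
  set P : Type u := ↥(A ∪ Set.range c) with hP
  have hPlt : #P < lam := by
    refine lt_of_le_of_lt (mk_union_le _ _) (add_lt_of_lt hreg.aleph0_le hAlt ?_)
    exact lt_trans (hcran.lt_aleph0) haleph
  -- block data at every α < lam.ord
  have main : ∀ α : Ordinal.{u}, α < lam.ord →
      ∃ d : ℕ × L.Formula ((ℕ × ℕ) ⊕ P),
        BlockAt (M := M) lam b Subtype.val α d.1 d.2 := by
    intro α hα
    obtain ⟨n, ψ, hψ⟩ := blockAt_of_not_indisc (lam := lam) g₀ (hb2 α hα c hc)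
    exact ⟨(n, ψ), hψ⟩
  choose dataOf hdata using main
  -- pigeonhole: some block shape occurs unboundedly often
  have hDcard : #(ℕ × L.Formula ((ℕ × ℕ) ⊕ P)) < lam := by
    have hV : #((ℕ × ℕ) ⊕ P) < lam := by
      rw [mk_sum]
      refine add_lt_of_lt hreg.aleph0_le ?_ (by rwa [Cardinal.lift_uzero])
      simp only [Cardinal.mk_prod, Cardinal.mk_nat, Cardinal.lift_aleph0, aleph0_mul_aleph0]
      exact haleph
    rw [Cardinal.mk_prod, Cardinal.mk_nat, Cardinal.lift_aleph0, Cardinal.lift_uzero]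
    exact mul_lt_of_lt hreg.aleph0_le haleph (formula_card_lt hreg haleph hV hLlt)
  have pig : ∃ d : ℕ × L.Formula ((ℕ × ℕ) ⊕ P), ∀ β, β < lam.ord →
      ∃ α, β ≤ α ∧ α < lam.ord ∧ BlockAt (M := M) lam b Subtype.val α d.1 d.2 := by
    by_contra hno
    push_neg at hno
    choose bf hbf1 hbf2 using hno
    have hsup : iSup bf < lam.ord := iSup_lt_ord_of_isRegular hreg hDcard hbf1
    exact hbf2 (dataOf (iSup bf) hsup) (iSup bf) (Ordinal.le_iSup bf _) hsup
      (hdata (iSup bf) hsup)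
  obtain ⟨⟨n, ψ⟩, hpig⟩ := pig
  -- pass to subtype form to enable recursion
  have hpig' : ∀ z : ↥(Set.Iio lam.ord), ∃ y : ↥(Set.Iio lam.ord),
      (z : Ordinal.{u}) ≤ (y : Ordinal.{u}) ∧
      ∃ (σ τ : ℕ → Ordinal.{u}) (g : ℕ → γb),
        (∀ p q, p < q → q ≤ n → σ p < σ q) ∧ (∀ p, n ≤ p → σ p = σ n) ∧
          (∀ p, (y : Ordinal.{u}) ≤ σ p ∧ σ p < lam.ord) ∧
        (∀ p q, p < q → q ≤ n → τ p < τ q) ∧ (∀ p, n ≤ p → τ p = τ n) ∧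
          (∀ p, (y : Ordinal.{u}) ≤ τ p ∧ τ p < lam.ord) ∧
        ψ.Realize (Sum.elim (fun pq => b (σ pq.1) (g pq.2)) Subtype.val) ∧
        ¬ ψ.Realize (Sum.elim (fun pq => b (τ pq.1) (g pq.2)) Subtype.val) := by
    rintro ⟨z, hz⟩
    obtain ⟨α, h1, h2, h3⟩ := hpig z hz
    rw [blockAt_def] at h3
    exact ⟨⟨α, h2⟩, h1, h3⟩
  choose next hle σF τF gF hσ1 hσ2 hσ3 hτ1 hτ2 hτ3 hT hF using hpig'
  -- the increasing chain of blocks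
  have hstep : ∀ z : ↥(Set.Iio lam.ord), max (σF z n) (τF z n) + 1 < lam.ord := by
    intro z
    rw [Ordinal.add_one_eq_succ]
    exact hlimit.succ_lt (max_lt (hσ3 z n).2 (hτ3 z n).2)
  set step : ↥(Set.Iio lam.ord) → ↥(Set.Iio lam.ord) :=
    fun z => ⟨max (σF z n) (τF z n) + 1, hstep z⟩ with hstepdef
  set xc : ℕ → ↥(Set.Iio lam.ord) := fun k => step^[k] ⟨0, h0⟩ with hxc
  set σB : ℕ → ℕ → Ordinal.{u} := fun k => σF (xc k) with hσB
  set τB : ℕ → ℕ → Ordinal.{u} := fun k => τF (xc k) with hτB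
  set gB : ℕ → ℕ → γb := fun k => gF (xc k) with hgB
  set lo : ℕ → Ordinal.{u} := fun k => ((next (xc k) : ↥(Set.Iio lam.ord)) : Ordinal.{u})
    with hlo
  set hi : ℕ → Ordinal.{u} := fun k => max (σB k n) (τB k n) with hhi
  have hxit : ∀ k, xc (k + 1) = step (xc k) := fun k =>
    Function.iterate_succ_apply' step k ⟨0, h0⟩
  have hxsucc : ∀ k, ((xc (k+1) : ↥(Set.Iio lam.ord)) : Ordinal.{u}) = hi k + 1 := by
    intro k
    rw [hxit k]
  have hσhi : ∀ k p, σB k p ≤ hi k := by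
    intro k p
    refine le_trans ?_ (le_max_left _ _)
    rcases lt_trichotomy p n with h | h | h
    · exact (hσ1 (xc k) p n h le_rfl).le
    · rw [h]
    · exact (hσ2 (xc k) p h.le).le
  have hτhi : ∀ k p, τB k p ≤ hi k := by
    intro k p
    refine le_trans ?_ (le_max_right _ _)
    rcases lt_trichotomy p n with h | h | h
    · exact (hτ1 (xc k) p n h le_rfl).le
    · rw [h]
    · exact (hτ2 (xc k) p h.le).le
  have h1cross : ∀ k, hi k < lo (k+1) := by
    intro k
    calc hi k < hi k + 1 := by
          rw [Ordinal.add_one_eq_succ]; exact Order.lt_succ _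
    _ = ((xc (k+1) : ↥(Set.Iio lam.ord)) : Ordinal.{u}) := (hxsucc k).symm
    _ ≤ lo (k+1) := hle (xc (k+1))
  have h2cross : ∀ k, lo k ≤ hi k := fun k => le_trans (hσ3 (xc k) n).1 (le_max_left _ _)
  have hlomono : StrictMono lo :=
    strictMono_nat_of_lt_succ (fun k => lt_of_le_of_lt (h2cross k) (h1cross k))
  have hcross : ∀ k k', k < k' → hi k < lo k' := fun k k' h =>
    lt_of_lt_of_le (h1cross k) (hlomono.monotone h)
  -- the IP formula
  set reprP : P → (γx ⊕ ↥A) := fun e =>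
    if h : (e : M) ∈ A then Sum.inr ⟨(e : M), h⟩ else Sum.inl (e.2.resolve_left h).choose
    with hreprP
  have hreprc : ∀ (e : P) (h : ¬ (e : M) ∈ A), c ((e.2.resolve_left h).choose) = (e : M) :=
    fun e h => (e.2.resolve_left h).choose_spec
  refine ⟨ULift.{u} (ℕ × ℕ), γx ⊕ ↥A, ψ.relabel (Sum.map ULift.up reprP), fun N => ?_⟩
  -- construct the automorphisms realizing each pattern
  have hauto : ∀ w : Finset (Fin N), ∃ e : M ≃[L] M,
      (∀ y : M, y ∈ A → e y = y) ∧
      (∀ (i : Fin N) (p q : ℕ),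
        e (b ((if i ∈ w then σB (i : ℕ) else τB (i : ℕ)) p) (gB (i : ℕ) q)) =
          b (σB (i : ℕ) p) (gB (i : ℕ) q)) := by
    intro w
    set r : Fin N → ℕ → Ordinal.{u} :=
      fun i => if i ∈ w then σB (i : ℕ) else τB (i : ℕ) with hr
    have hrlt : ∀ (i : Fin N) (p : ℕ), r i p < lam.ord := by
      intro i p
      rw [hr]
      by_cases hiw : i ∈ w
      · simp only [hiw, if_true]; exact (hσ3 (xc (i : ℕ)) p).2
      · simp only [hiw, if_false]; exact (hτ3 (xc (i : ℕ)) p).2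
    have hrlo : ∀ (i : Fin N) (p : ℕ), lo (i : ℕ) ≤ r i p := by
      intro i p
      rw [hr]
      by_cases hiw : i ∈ w
      · simp only [hiw, if_true]; exact (hσ3 (xc (i : ℕ)) p).1
      · simp only [hiw, if_false]; exact (hτ3 (xc (i : ℕ)) p).1
    have hrhi : ∀ (i : Fin N) (p : ℕ), r i p ≤ hi (i : ℕ) := by
      intro i p
      rw [hr]
      by_cases hiw : i ∈ w
      · simp only [hiw, if_true]; exact hσhi _ _
      · simp only [hiw, if_false]; exact hτhi _ _
    have hrs : ∀ (i : Fin N) (p q : ℕ), p < q → q ≤ n → r i p < r i q := by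
      intro i p q hpq hq
      rw [hr]
      by_cases hiw : i ∈ w
      · simp only [hiw, if_true]; exact hσ1 (xc (i : ℕ)) p q hpq hq
      · simp only [hiw, if_false]; exact hτ1 (xc (i : ℕ)) p q hpq hq
    have hσc : ∀ (k p : ℕ), σB k (min p n) = σB k p := by
      intro k p
      rcases le_total p n with h | h
      · rw [Nat.min_eq_left h]
      · rw [Nat.min_eq_right h]
        exact (hσ2 (xc k) p h).symm
    have hrc : ∀ (i : Fin N) (p : ℕ), r i (min p n) = r i p := by
      intro i p
      rcases le_total p n with h | h
      · rw [Nat.min_eq_left h]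
      · rw [Nat.min_eq_right h, hr]
        by_cases hiw : i ∈ w
        · simp only [hiw, if_true]; exact (hσ2 (xc (i : ℕ)) p h).symm
        · simp only [hiw, if_false]; exact (hτ2 (xc (i : ℕ)) p h).symm
    have hdivlt : ∀ j : Fin (N * (n + 1)), (j : ℕ) / (n + 1) < N :=
      fun j => (Nat.div_lt_iff_lt_mul (Nat.succ_pos n)).2 j.isLt
    -- strict monotonicity of block concatenations
    have hsm : ∀ v : Fin N → ℕ → Ordinal.{u},
        (∀ i p q, p < q → q ≤ n → v i p < v i q) →
        (∀ (i : Fin N) (p : ℕ), lo (i : ℕ) ≤ v i p) →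
        (∀ (i : Fin N) (p : ℕ), v i p ≤ hi (i : ℕ)) →
        StrictMono (fun j : Fin (N * (n + 1)) =>
          v ⟨(j : ℕ) / (n + 1), hdivlt j⟩ ((j : ℕ) % (n + 1))) := by
      intro v hst hlo' hhi' j j' hjj
      have hjlt : (j : ℕ) < (j' : ℕ) := hjj
      have hdle : (j : ℕ) / (n + 1) ≤ (j' : ℕ) / (n + 1) := Nat.div_le_div_right hjlt.le
      rcases eq_or_lt_of_le hdle with hde | hdlt
      · have hm1 := Nat.div_add_mod (j : ℕ) (n + 1)
        have hm2 := Nat.div_add_mod (j' : ℕ) (n + 1)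
        have hmlt : (j' : ℕ) % (n + 1) < n + 1 := Nat.mod_lt _ (by omega)
        have hde' : (n + 1) * ((j : ℕ) / (n + 1)) = (n + 1) * ((j' : ℕ) / (n + 1)) := by
          rw [hde]
        have hmod : (j : ℕ) % (n + 1) < (j' : ℕ) % (n + 1) := by omega
        have hfe : (⟨(j : ℕ) / (n + 1), hdivlt j⟩ : Fin N) = ⟨(j' : ℕ) / (n + 1), hdivlt j'⟩ :=
          Fin.ext hde
        show v _ _ < v _ _
        rw [hfe]
        exact hst _ _ _ hmod (by omega)
      · calc v ⟨(j : ℕ) / (n + 1), hdivlt j⟩ ((j : ℕ) % (n + 1)) ≤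
            hi ((j : ℕ) / (n + 1)) := hhi' _ _
        _ < lo ((j' : ℕ) / (n + 1)) := hcross _ _ hdlt
        _ ≤ v ⟨(j' : ℕ) / (n + 1), hdivlt j'⟩ ((j' : ℕ) % (n + 1)) := hlo' _ _
    set u₁ : Fin (N * (n + 1)) → Ordinal.{u} :=
      fun j => r ⟨(j : ℕ) / (n + 1), hdivlt j⟩ ((j : ℕ) % (n + 1)) with hu₁
    set u₂ : Fin (N * (n + 1)) → Ordinal.{u} :=
      fun j => (fun (i : Fin N) (p : ℕ) => σB (i : ℕ) p) ⟨(j : ℕ) / (n + 1), hdivlt j⟩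
        ((j : ℕ) % (n + 1)) with hu₂
    have hsm₁ : StrictMono u₁ := hsm r hrs hrlo hrhi
    have hsm₂ : StrictMono u₂ :=
      hsm (fun (i : Fin N) (p : ℕ) => σB (i : ℕ) p) (fun i => hσ1 (xc (i : ℕ)))
        (fun i p => (hσ3 (xc (i : ℕ)) p).1) (fun i p => hσhi _ _)
    have hm₁ : ∀ j, u₁ j ∈ Set.Iio lam.ord := fun j => hrlt _ _
    have hm₂ : ∀ j, u₂ j ∈ Set.Iio lam.ord := fun j => (hσ3 (xc _) _).2
    -- block positions inside the concatenation
    have hposlt : ∀ (i : Fin N) (p : ℕ), (i : ℕ) * (n + 1) + min p n < N * (n + 1) := by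
      intro i p
      have h1 : (i : ℕ) * (n + 1) + min p n < ((i : ℕ) + 1) * (n + 1) := by
        have : min p n ≤ n := Nat.min_le_right p n
        calc (i : ℕ) * (n + 1) + min p n ≤ (i : ℕ) * (n + 1) + n := by omega
        _ < (i : ℕ) * (n + 1) + (n + 1) := by omega
        _ = ((i : ℕ) + 1) * (n + 1) := by ring
      exact lt_of_lt_of_le h1 (Nat.mul_le_mul_right _ i.isLt)
    set posIdx : Fin N → ℕ → Fin (N * (n + 1)) :=
      fun i p => ⟨(i : ℕ) * (n + 1) + min p n, hposlt i p⟩ with hposIdx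
    have hdm : ∀ (i : Fin N) (p : ℕ), ((i : ℕ) * (n + 1) + min p n) / (n + 1) = (i : ℕ) ∧
        ((i : ℕ) * (n + 1) + min p n) % (n + 1) = min p n := by
      intro i p
      have hminlt : min p n < n + 1 := Nat.lt_succ_of_le (Nat.min_le_right p n)
      constructor
      · rw [Nat.mul_comm (i : ℕ) (n + 1), Nat.mul_add_div (Nat.succ_pos n),
          Nat.div_eq_of_lt hminlt, Nat.add_zero]
      · rw [Nat.mul_comm (i : ℕ) (n + 1), Nat.mul_add_mod, Nat.mod_eq_of_lt hminlt]
    have hu₁pos : ∀ (i : Fin N) (p : ℕ), u₁ (posIdx i p) = r i p := by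
      intro i p
      have hfe : (⟨((i : ℕ) * (n + 1) + min p n) / (n + 1),
          hdivlt (posIdx i p)⟩ : Fin N) = i := Fin.ext (hdm i p).1
      show r ⟨((i : ℕ) * (n + 1) + min p n) / (n + 1), hdivlt (posIdx i p)⟩
        (((i : ℕ) * (n + 1) + min p n) % (n + 1)) = r i p
      rw [hfe, (hdm i p).2, hrc]
    have hu₂pos : ∀ (i : Fin N) (p : ℕ), u₂ (posIdx i p) = σB (i : ℕ) p := by
      intro i p
      have hfe : (⟨((i : ℕ) * (n + 1) + min p n) / (n + 1),
          hdivlt (posIdx i p)⟩ : Fin N) = i := Fin.ext (hdm i p).1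
      show σB (((⟨((i : ℕ) * (n + 1) + min p n) / (n + 1), hdivlt (posIdx i p)⟩ : Fin N)) : ℕ)
        (((i : ℕ) * (n + 1) + min p n) % (n + 1)) = σB (i : ℕ) p
      rw [hfe, (hdm i p).2, hσc]
    -- the source and target of the partial elementary map
    set S : Set M := Set.range (fun z : Fin N × ℕ × ℕ =>
      b (r z.1 z.2.1) (gB ((z.1 : Fin N) : ℕ) z.2.2)) with hSd
    set srcOf : (↥A ⊕ (Fin N × ℕ × ℕ)) → M :=
      Sum.elim Subtype.val (fun z => b (r z.1 z.2.1) (gB ((z.1 : Fin N) : ℕ) z.2.2)) with hsrc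
    set tgtOf : (↥A ⊕ (Fin N × ℕ × ℕ)) → M :=
      Sum.elim Subtype.val (fun z => b (σB ((z.1 : Fin N) : ℕ) z.2.1)
        (gB ((z.1 : Fin N) : ℕ) z.2.2)) with htgt
    set conv : (↥A ⊕ (Fin N × ℕ × ℕ)) → ((Fin (N * (n + 1)) × γb) ⊕ ↥A) :=
      Sum.elim (fun y => Sum.inr y)
        (fun z => Sum.inl (posIdx z.1 z.2.1, gB ((z.1 : Fin N) : ℕ) z.2.2)) with hconv
    have hsrceq : (Sum.elim (fun p : Fin (N * (n + 1)) × γb => b (u₁ p.1) p.2)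
        Subtype.val) ∘ conv = srcOf := by
      funext z
      cases z with
      | inl y => rfl
      | inr z =>
        show b (u₁ (posIdx z.1 z.2.1)) (gB _ z.2.2) = _
        rw [hu₁pos]
        rfl
    have htgteq : (Sum.elim (fun p : Fin (N * (n + 1)) × γb => b (u₂ p.1) p.2)
        Subtype.val) ∘ conv = tgtOf := by
      funext z
      cases z with
      | inl y => rfl
      | inr z =>
        show b (u₂ (posIdx z.1 z.2.1)) (gB _ z.2.2) = _
        rw [hu₂pos]
        rfl
    have Htr : ∀ (k : ℕ) (χ : L.Formula (Fin k)) (h : Fin k → (↥A ⊕ (Fin N × ℕ × ℕ))),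
        χ.Realize (srcOf ∘ h) ↔ χ.Realize (tgtOf ∘ h) := by
      intro k χ h
      rw [← hsrceq, ← htgteq]
      exact indisc_transfer hb1 hsm₁ hsm₂ hm₁ hm₂ χ (conv ∘ h)
    -- the partial elementary map itself
    set rep : ↥(A ∪ S) → (↥A ⊕ (Fin N × ℕ × ℕ)) := fun e =>
      if h : (e : M) ∈ A then Sum.inl ⟨(e : M), h⟩ else Sum.inr (e.2.resolve_left h).choose
      with hrepd
    have hrepval : ∀ e : ↥(A ∪ S), srcOf (rep e) = (e : M) := by
      intro e
      rw [hrepd]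
      by_cases h : (e : M) ∈ A
      · simp only [dif_pos h]
        rfl
      · simp only [dif_neg h]
        exact (e.2.resolve_left h).choose_spec
    have hScnt : #(↥S) ≤ ℵ₀ := (Set.countable_range _).le_aleph0
    have hcard : #(↥(A ∪ S)) < κbar := by
      refine lt_of_le_of_lt (mk_union_le _ _) (lt_trans ?_ hlam)
      exact add_lt_of_lt hreg.aleph0_le hAlt (lt_of_le_of_lt hScnt haleph)
    have hcond : ∀ (k : ℕ) (χ : L.Formula (Fin k)) (v : Fin k → ↥(A ∪ S)),
        χ.Realize (fun j => ((v j : M))) ↔ χ.Realize (fun j => (tgtOf ∘ rep) (v j)) := by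
      intro k χ v
      have l1 : (fun j => ((v j : M))) = srcOf ∘ (rep ∘ v) :=
        funext fun j => (hrepval (v j)).symm
      rw [l1]
      exact Htr k χ (rep ∘ v)
    obtain ⟨e, he⟩ := hM.homogeneous (A ∪ S) (tgtOf ∘ rep) hcard hcond
    refine ⟨e, ?_, ?_⟩
    · intro y hy
      have h1 := he ⟨y, Or.inl hy⟩
      rw [h1]
      show tgtOf (rep ⟨y, Or.inl hy⟩) = y
      rw [hrepd]
      simp only [dif_pos hy]
      rfl
    · intro i p q
      have hmem : b (r i p) (gB (i : ℕ) q) ∈ A ∪ S := Or.inr ⟨(i, p, q), rfl⟩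
      have h1 := he ⟨_, hmem⟩
      have h2 : tgtOf (rep ⟨_, hmem⟩) = tgtOf (Sum.inr (i, p, q)) := by
        have h3 := Htr 2 (Term.equal (Term.var 0) (Term.var 1))
          ![rep ⟨_, hmem⟩, Sum.inr (i, p, q)]
        simp only [Formula.realize_equal, Term.realize_var, Function.comp_apply,
          Matrix.cons_val_zero, Matrix.cons_val_one, Matrix.head_cons] at h3
        exact h3.1 (by rw [hrepval]; rfl)
      have h4 : e (b (r i p) (gB (i : ℕ) q)) = tgtOf (Sum.inr (i, p, q)) := by
        rw [← h2]
        exact h1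
      rw [hr] at h4
      exact h4
  choose es hesA hesb using hauto
  refine ⟨fun i z => b (σB (i : ℕ) z.down.1) (gB (i : ℕ) z.down.2),
    fun w => Sum.elim (fun j => es w (c j)) Subtype.val, fun i w => ?_⟩
  have known : ψ.Realize (Sum.elim
      (fun pq : ℕ × ℕ => b ((if i ∈ w then σB (i : ℕ) else τB (i : ℕ)) pq.1) (gB (i : ℕ) pq.2))
      Subtype.val) ↔ i ∈ w := by
    by_cases hiw : i ∈ w
    · simp only [hiw, if_true, iff_true]
      exact hT (xc (i : ℕ))
    · simp only [hiw, if_false, iff_false]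
      exact hF (xc (i : ℕ))
  have hperm := StrongHomClass.realize_formula (es w) (φ := ψ)
    (v := Sum.elim (fun pq : ℕ × ℕ =>
      b ((if i ∈ w then σB (i : ℕ) else τB (i : ℕ)) pq.1) (gB (i : ℕ) pq.2)) Subtype.val)
  have hcomp : (⇑(es w)) ∘ (Sum.elim (fun pq : ℕ × ℕ =>
      b ((if i ∈ w then σB (i : ℕ) else τB (i : ℕ)) pq.1) (gB (i : ℕ) pq.2)) Subtype.val) =
      (Sum.elim (fun z : ULift.{u} (ℕ × ℕ) => b (σB (i : ℕ) z.down.1) (gB (i : ℕ) z.down.2))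
        (Sum.elim (fun j => es w (c j)) Subtype.val)) ∘ (Sum.map ULift.up reprP) := by
    funext z
    cases z with
    | inl pq =>
      show es w (b ((if i ∈ w then σB (i : ℕ) else τB (i : ℕ)) pq.1) (gB (i : ℕ) pq.2)) =
        b (σB (i : ℕ) pq.1) (gB (i : ℕ) pq.2)
      exact hesb w i pq.1 pq.2
    | inr e' =>
      show es w (e' : M) = Sum.elim (fun j => es w (c j)) Subtype.val (reprP e')
      rw [hreprP]
      by_cases h : (e' : M) ∈ A
      · simp only [dif_pos h]
        exact hesA w _ h
      · simp only [dif_neg h]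
        show es w (e' : M) = es w (c ((e'.2.resolve_left h).choose))
        rw [hreprc e' h]
  rw [Formula.realize_relabel]
  exact (Iff.of_eq (congrArg _ hcomp.symm)).trans (hperm.trans known)

end ShredPaper
end

section
/- Let T be a complete first-order theory and Δ(x,y) a set of formulas over ∅. Suppose that for every formula φ(x,y) ∈ Δ there is a formula θ_φ(x,z) such that for any finite φ-type r(x) over a model M ⊨ T and any finite set A ⊆ M^x of realizations of r, there is b ∈ M^z with θ_φ(a,b) holding for all a ∈ A and θ_φ(x,b) ⊢ r(x). Then T has singular compactness for Δ: whenever M ⊨ T is μ-saturated for a singular cardinal μ > |T|, every Δ-type over a subset of M of size ≤ μ is realized in M. -/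
open FirstOrder FirstOrder.Language Cardinal Set

universe u

namespace ShredPaper

variable {L : FirstOrder.Language.{u, u}} {M : Type u} [L.Structure M]

/-!
Since `cf μ < μ`, the set `A` is the union of a chain `(A_i)_{i ∈ S}` of sets of size `< μ` with
`|S| < μ`. Saturation gives a realization `d_i` of `p ↾ A_i` for each `i`. For `φ ∈ Δ` and `i ∈ S`,
saturation over `A_i ∪ {d_j : j ∈ S}` upgrades the finite condition on `θ_φ` to a single parameter
`b_{φ,i}` such that `θ_φ(x, b_{φ,i})` implies `p_φ ↾ A_i` and holds of every `d_j` with `j ≥ i`.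
The type `{θ_φ(x, b_{φ,i}) : φ ∈ Δ, i ∈ S}` has fewer than `μ` parameters and is finitely
satisfied by the `d_j`, so it is realized, and every realization of it realizes `p`.
-/

universe v

theorem mk_formula_le_of_finite {α : Type v} [Finite α] :
    #(L.Formula α) ≤ lift.{v} L.card + ℵ₀ :=
  calc #(L.Formula α) ≤ #(Σ n, L.BoundedFormula α n) :=
        mk_le_of_injective (sigma_mk_injective (i := 0))
    _ ≤ max ℵ₀ (lift #α + lift L.card) := BoundedFormula.card_le
    _ ≤ lift L.card + ℵ₀ := by
        refine max_le le_add_self ?_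
        rw [add_comm]
        gcongr
        exact (lift_lt_aleph0.2 (lt_aleph0_of_finite α)).le

theorem mk_iUnion_range_fin_lt {α ι : Type u} {n : ι → ℕ} (f : ∀ i, Fin (n i) → α)
    {μ : Cardinal.{u}} (hμ : ℵ₀ < μ) (hι : #ι < μ) : #(⋃ i, range (f i)) < μ :=
  (mk_iUnion_le _).trans_lt <| mul_lt_of_lt hμ.le hι <|
    (ciSup_le' fun i => (finite_range (f i)).lt_aleph0.le).trans_lt hμ

theorem exists_chain_cover_of_cof_lt {α : Type u} {μ : Cardinal.{u}} (hμ : ℵ₀ ≤ μ)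
    (hsing : μ.ord.cof < μ) {A : Set α} (hA : #A ≤ μ) :
    ∃ (ι : Type u) (_ : LinearOrder ι) (B : ι → Set α),
      Nonempty ι ∧ #ι < μ ∧ Monotone B ∧ (∀ i, #(B i) < μ) ∧ A ⊆ ⋃ i, B i := by
  obtain ⟨g⟩ : Nonempty (A ↪ μ.ord.ToType) := by rwa [← le_def, mk_ord_toType]
  obtain ⟨S, hS, hScard⟩ := Order.exists_cof_eq μ.ord.ToType
  have : Nonempty μ.ord.ToType := by
    rw [← mk_ne_zero_iff, mk_ord_toType]
    exact (aleph0_pos.trans_le hμ).ne'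
  refine ⟨S, inferInstance, fun s => Subtype.val '' (g ⁻¹' Iic (s : μ.ord.ToType)),
    hS.nonempty.to_subtype, by rwa [hScard, Ordinal.cof_toType], ?_, fun s => ?_, ?_⟩
  · exact fun s t hst => image_mono (preimage_mono (Iic_subset_Iic.2 hst))
  · calc #(Subtype.val '' (g ⁻¹' Iic (s : μ.ord.ToType)))
        ≤ #(Iic (s : μ.ord.ToType)) := mk_image_le.trans (mk_preimage_of_injective _ _ g.injective)
      _ < #μ.ord.ToType := mk_Iic_lt _ (by simp) (by simpa using hμ)
      _ = μ := mk_ord_toType μ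
  · intro a ha
    obtain ⟨s, hs, hgs⟩ := hS (g ⟨a, ha⟩)
    exact mem_iUnion.2 ⟨⟨s, hs⟩, ⟨a, ha⟩, hgs, rfl⟩

/-- `∀ x, θ(x; z) → φ(x; y)`. -/
noncomputable def forallImp {γ α β : Type*} [Finite γ] (θ : L.Formula (γ ⊕ α))
    (φ : L.Formula (γ ⊕ β)) : L.Formula (α ⊕ β) :=
  Formula.iAlls γ ((θ.relabel (Sum.elim Sum.inr (Sum.inl ∘ Sum.inl))).imp
    (φ.relabel (Sum.elim Sum.inr (Sum.inl ∘ Sum.inr))))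

/-- The paper's condition on `θ_φ`, in the model `N`. -/
def ApproximatesFinTypes (N : Type u) [L.Structure N] {mx my mz : ℕ}
    (θ : L.Formula (Fin mx ⊕ Fin mz)) (φ : L.Formula (Fin mx ⊕ Fin my)) : Prop :=
  ∀ (s t : ℕ) (r : Fin s → Fin my → N) (Av : Fin t → Fin mx → N),
    (∃ c : Fin mx → N, ∀ i, φ.Realize (Sum.elim c (r i))) →
    (∀ j i, φ.Realize (Sum.elim (Av j) (r i))) →
    ∃ b : Fin mz → N, (∀ j, θ.Realize (Sum.elim (Av j) b)) ∧
      ∀ c : Fin mx → N, θ.Realize (Sum.elim c b) → ∀ i, φ.Realize (Sum.elim c (r i))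

section Saturation

variable {N : Type u} [L.Structure N] {μ : Cardinal.{u}} {mx my mz : ℕ}

theorem realize_forallImp {γ α β : Type*} [Finite γ] (θ : L.Formula (γ ⊕ α))
    (φ : L.Formula (γ ⊕ β)) (b : α → N) (a : β → N) :
    (forallImp θ φ).Realize (Sum.elim b a) ↔
      ∀ c : γ → N, θ.Realize (Sum.elim c b) → φ.Realize (Sum.elim c a) := by
  simp only [forallImp, Formula.realize_iAlls, Formula.realize_imp, Formula.realize_relabel]
  refine forall_congr' fun c => ?_
  have hθ : (fun x => Sum.elim (Sum.elim b a) c x) ∘ Sum.elim Sum.inr (Sum.inl ∘ Sum.inl) =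
      Sum.elim c b := by ext (_ | _) <;> rfl
  have hφ : (fun x => Sum.elim (Sum.elim b a) c x) ∘ Sum.elim Sum.inr (Sum.inl ∘ Sum.inr) =
      Sum.elim c a := by ext (_ | _) <;> rfl
  rw [hθ, hφ]

theorem IsSaturatedModel.exists_forall_realize
    (hsat : IsSaturatedModel L N μ) {k : ℕ} {ι : Type*} {β : ι → Type*}
    (ψ : ∀ i, L.Formula (Fin k ⊕ β i)) (e : ∀ i, β i → N) {P : Set N} (hP : #P < μ)
    (heP : ∀ i b, e i b ∈ P)
    (hfin : ∀ F : Finset ι, ∃ c : Fin k → N, ∀ i ∈ F, (ψ i).Realize (Sum.elim c (e i))) :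
    ∃ c : Fin k → N, ∀ i, (ψ i).Realize (Sum.elim c (e i)) := by
  classical
  let ψP i : L.Formula (Fin k ⊕ P) := (ψ i).relabel (Sum.map id fun b => ⟨e i b, heP i b⟩)
  have hψP : ∀ i c, (ψP i).Realize (Sum.elim c Subtype.val) ↔ (ψ i).Realize (Sum.elim c (e i)) :=
    fun i c => by simp only [ψP, Formula.realize_relabel, Sum.elim_comp_map]; rfl
  obtain ⟨c, hc⟩ := hsat k P (range ψP) hP fun F hF => by
    rw [← image_univ, Finset.subset_set_image_iff] at hF
    obtain ⟨G, -, rfl⟩ := hF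
    obtain ⟨c, hc⟩ := hfin G
    refine ⟨c, fun φ hφ => ?_⟩
    obtain ⟨i, hi, rfl⟩ := Finset.mem_image.1 hφ
    exact (hψP i c).2 (hc i hi)
  exact ⟨c, fun i => (hψP i c).1 (hc _ (mem_range_self i))⟩

theorem IsSaturatedModel.exists_realize_of_params_mem (hsat : IsSaturatedModel L N μ)
    {p : Set (L.Formula (Fin mx ⊕ Fin my) × (Fin my → N))}
    (hcons : ∀ F : Finset (L.Formula (Fin mx ⊕ Fin my) × (Fin my → N)), ↑F ⊆ p →
      ∃ c : Fin mx → N, ∀ q ∈ F, q.1.Realize (Sum.elim c q.2))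
    {P : Set N} (hP : #P < μ) :
    ∃ c : Fin mx → N, ∀ q ∈ p, (∀ k, q.2 k ∈ P) → q.1.Realize (Sum.elim c q.2) := by
  classical
  obtain ⟨c, hc⟩ := hsat.exists_forall_realize (ι := {q // q ∈ p ∧ ∀ k, q.2 k ∈ P})
    (fun q => q.1.1) (fun q => q.1.2) hP (fun q => q.2.2) fun F => by
      obtain ⟨c, hc⟩ := hcons (F.image Subtype.val) fun q hq => by
        obtain ⟨q', -, rfl⟩ := Finset.mem_image.1 hq
        exact q'.2.1
      exact ⟨c, fun q hq => hc q.1 (Finset.mem_image_of_mem _ hq)⟩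
  exact ⟨c, fun q hq hqP => hc ⟨q, hq, hqP⟩⟩

variable {θ : L.Formula (Fin mx ⊕ Fin mz)} {φ : L.Formula (Fin mx ⊕ Fin my)}

theorem ApproximatesFinTypes.exists_of_finite (h : ApproximatesFinTypes N θ φ) {σ τ : Type*}
    [Finite σ] [Finite τ] (r : σ → Fin my → N) (D : τ → Fin mx → N)
    (hr : ∃ c : Fin mx → N, ∀ i, φ.Realize (Sum.elim c (r i)))
    (hD : ∀ j i, φ.Realize (Sum.elim (D j) (r i))) :
    ∃ b : Fin mz → N, (∀ j, θ.Realize (Sum.elim (D j) b)) ∧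
      ∀ c : Fin mx → N, θ.Realize (Sum.elim c b) → ∀ i, φ.Realize (Sum.elim c (r i)) := by
  obtain ⟨s, ⟨eσ⟩⟩ := Finite.exists_equiv_fin σ
  obtain ⟨t, ⟨eτ⟩⟩ := Finite.exists_equiv_fin τ
  obtain ⟨c, hc⟩ := hr
  obtain ⟨b, hDb, hb⟩ := h s t (r ∘ eσ.symm) (D ∘ eτ.symm) ⟨c, fun i => hc _⟩ fun j i => hD _ _
  exact ⟨b, fun j => by simpa using hDb (eτ j), fun c hc i => by simpa using hb c hc (eσ i)⟩

/-- `b` realizes the type `{θ(D j, z) : j} ∪ {∀ x, θ(x, z) → φ(x, a) : a ∈ R}`, which has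
fewer than `μ` parameters and is finitely satisfiable by `exists_of_finite`. -/
theorem ApproximatesFinTypes.exists_of_isSaturatedModel (h : ApproximatesFinTypes N θ φ)
    (hsat : IsSaturatedModel L N μ) (hμ : ℵ₀ < μ)
    {R : Set (Fin my → N)} {P : Set N} (hP : #P < μ) (hRP : ∀ a ∈ R, ∀ k, a k ∈ P)
    {τ : Type u} (hτ : #τ < μ) (D : τ → Fin mx → N)
    (hR : ∃ c : Fin mx → N, ∀ a ∈ R, φ.Realize (Sum.elim c a))
    (hD : ∀ j, ∀ a ∈ R, φ.Realize (Sum.elim (D j) a)) :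
    ∃ b : Fin mz → N, (∀ j, θ.Realize (Sum.elim (D j) b)) ∧
      ∀ c : Fin mx → N, θ.Realize (Sum.elim c b) → ∀ a ∈ R, φ.Realize (Sum.elim c a) := by
  let β : τ ⊕ R → Type := Sum.elim (fun _ => Fin mx) (fun _ => Fin my)
  let ψ : ∀ x, L.Formula (Fin mz ⊕ β x) := fun
    | .inl _ => θ.relabel Sum.swap
    | .inr _ => forallImp θ φ
  let e : ∀ x, β x → N := fun
    | .inl j => D j
    | .inr a => a.1
  have hswap : ∀ j b, (θ.relabel Sum.swap).Realize (Sum.elim b (D j)) ↔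
      θ.Realize (Sum.elim (D j) b) :=
    fun j b => by rw [Formula.realize_relabel, Sum.elim_swap]
  have hPD : #↑(P ∪ ⋃ j, range (D j)) < μ := (mk_union_le _ _).trans_lt <|
    add_lt_of_lt hμ.le hP (mk_iUnion_range_fin_lt (n := fun _ => mx) D hμ hτ)
  obtain ⟨b, hb⟩ := hsat.exists_forall_realize ψ e hPD
    (by
      rintro (j | a) k
      · exact mem_union_right _ (mem_iUnion.2 ⟨j, mem_range_self k⟩)
      · exact mem_union_left _ (hRP a.1 a.2 k))
    (by
      intro F
      obtain ⟨b, hDb, hb⟩ := h.exists_of_finite (σ := F.toRight) (τ := F.toLeft)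
        (fun a => a.1.1) (fun j => D j.1)
        (hR.imp fun c hc a => hc _ a.1.2) fun j a => hD _ _ a.1.2
      refine ⟨b, ?_⟩
      rintro (j | a) hx
      · exact (hswap j b).2 (hDb ⟨j, Finset.mem_toLeft.2 hx⟩)
      · exact (realize_forallImp θ φ b a.1).2 fun c hc => hb c hc ⟨a, Finset.mem_toRight.2 hx⟩)
  exact ⟨b, fun j => (hswap j b).1 (hb (.inl j)),
    fun c hc a ha => (realize_forallImp θ φ b a).1 (hb (.inr ⟨a, ha⟩)) c hc⟩

theorem IsSaturatedModel.exists_realize_of_cof_lt (hsat : IsSaturatedModel L N μ)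
    (hμ : ℵ₀ < μ) (hsing : μ.ord.cof < μ) {Δ : Set (L.Formula (Fin mx ⊕ Fin my))} (hΔ : #Δ < μ)
    (happrox : ∀ φ ∈ Δ, ∃ (mz : ℕ) (θ : L.Formula (Fin mx ⊕ Fin mz)),
      ApproximatesFinTypes N θ φ)
    {A : Set N} (hA : #A ≤ μ) {p : Set (L.Formula (Fin mx ⊕ Fin my) × (Fin my → N))}
    (hpΔ : ∀ q ∈ p, q.1 ∈ Δ) (hparams : ∀ q ∈ p, ∀ k, q.2 k ∈ A)
    (hcons : ∀ F : Finset (L.Formula (Fin mx ⊕ Fin my) × (Fin my → N)), ↑F ⊆ p →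
      ∃ c : Fin mx → N, ∀ q ∈ F, q.1.Realize (Sum.elim c q.2)) :
    ∃ c : Fin mx → N, ∀ q ∈ p, q.1.Realize (Sum.elim c q.2) := by
  classical
  obtain ⟨ι, _, B, _, hι, hB, hBcard, hAB⟩ := exists_chain_cover_of_cof_lt hμ.le hsing hA
  have hcover : ∀ q ∈ p, ∃ i, ∀ k, q.2 k ∈ B i := by
    intro q hq
    choose i hi using fun k => mem_iUnion.1 (hAB (hparams q hq k))
    obtain ⟨j, hj⟩ := Finite.exists_le i
    exact ⟨j, fun k => hB (hj k) (hi k)⟩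
  choose mz θ hθ using fun φ : Δ => happrox φ.1 φ.2
  choose d hd using fun i => hsat.exists_realize_of_params_mem hcons (hBcard i)
  have hb (φ : Δ) (i : ι) : ∃ b : Fin (mz φ) → N,
      (∀ j : Ici i, (θ φ).Realize (Sum.elim (d j) b)) ∧
      ∀ c, (θ φ).Realize (Sum.elim c b) →
        ∀ a ∈ {a | (φ.1, a) ∈ p ∧ ∀ k, a k ∈ B i}, φ.1.Realize (Sum.elim c a) :=
    (hθ φ).exists_of_isSaturatedModel hsat hμ (hBcard i) (fun a ha => ha.2)
      ((mk_subtype_le _).trans_lt hι) (fun j => d j) ⟨d i, fun a ha => hd i _ ha.1 ha.2⟩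
      fun j a ha => hd j _ ha.1 fun k => hB j.2 (ha.2 k)
  choose b hbd hbp using hb
  have hΔι : #(Δ × ι) < μ := by
    rw [mk_prod, lift_id, lift_id]
    exact mul_lt_of_lt hμ.le hΔ hι
  obtain ⟨c, hc⟩ := hsat.exists_forall_realize (fun x : Δ × ι => θ x.1) (fun x => b x.1 x.2)
    (mk_iUnion_range_fin_lt (fun x : Δ × ι => b x.1 x.2) hμ hΔι)
    (fun x k => mem_iUnion.2 ⟨x, mem_range_self k⟩) fun F => by
      obtain ⟨j, hj⟩ := Finset.exists_le (F.image Prod.snd)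
      exact ⟨d j, fun x hx => hbd x.1 x.2 ⟨j, hj _ (Finset.mem_image_of_mem _ hx)⟩⟩
  refine ⟨c, fun q hq => ?_⟩
  obtain ⟨i, hi⟩ := hcover q hq
  exact hbp ⟨q.1, hpΔ q hq⟩ i c (hc (⟨q.1, hpΔ q hq⟩, i)) q.2 ⟨hq, hi⟩

end Saturation

theorem singular_compactness_criterion_general
    {L : FirstOrder.Language.{u, u}} (T : L.Theory)
    (mx my : ℕ) (Δ : Set (L.Formula (Fin mx ⊕ Fin my)))
    (hcond : ∀ φ ∈ Δ, ∃ (mz : ℕ) (θ : L.Formula (Fin mx ⊕ Fin mz)),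
      ∀ (N : Type u) [inst : L.Structure N], N ⊨ T →
        ∀ (s t : ℕ) (r : Fin s → Fin my → N) (Av : Fin t → Fin mx → N),
          (∃ c : Fin mx → N, ∀ i, Formula.Realize φ (Sum.elim c (r i))) →
          (∀ j i, Formula.Realize φ (Sum.elim (Av j) (r i))) →
          ∃ b : Fin mz → N,
            (∀ j, Formula.Realize θ (Sum.elim (Av j) b)) ∧
            ∀ c : Fin mx → N, Formula.Realize θ (Sum.elim c b) →
              ∀ i, Formula.Realize φ (Sum.elim c (r i)))
    (μ : Cardinal.{u}) (hsing : μ.ord.cof < μ) (hμT : L.card + ℵ₀ < μ)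
    (N : Type u) [L.Structure N] (hN : N ⊨ T) (hsat : IsSaturatedModel L N μ)
    (A : Set N) (hA : #A ≤ μ)
    (p : Set ((L.Formula (Fin mx ⊕ Fin my)) × (Fin my → N)))
    (hpΔ : ∀ q ∈ p, q.1 ∈ Δ) (hparams : ∀ q ∈ p, ∀ i, q.2 i ∈ A)
    (hcons : ∀ F : Finset ((L.Formula (Fin mx ⊕ Fin my)) × (Fin my → N)), ↑F ⊆ p →
      ∃ c : Fin mx → N, ∀ q ∈ F, Formula.Realize q.1 (Sum.elim c q.2)) :
    ∃ c : Fin mx → N, ∀ q ∈ p, Formula.Realize q.1 (Sum.elim c q.2) := by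
  have hμ : ℵ₀ < μ := le_add_self.trans_lt hμT
  have hΔ : #Δ < μ := by
    have := mk_formula_le_of_finite (L := L) (α := Fin mx ⊕ Fin my)
    rw [lift_uzero] at this
    exact ((mk_set_le Δ).trans this).trans_lt hμT
  refine hsat.exists_realize_of_cof_lt hμ hsing hΔ (fun φ hφ => ?_) hA hpΔ hparams hcons
  obtain ⟨mz, θ, hθ⟩ := hcond φ hφ
  exact ⟨mz, θ, hθ N hN⟩

/-- a criterion for singular compactness: if for every `φ(x, y) ∈ Δ`
there is `θ_φ(x, z)` such that for every model `N ⊨ T`, every finite `φ`-type `r(x)` over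
`N` and every finite set of realizations of `r` there is `b` with `θ_φ(a, b)` for all such
realizations `a` and `θ_φ(x, b) ⊢ r(x)`, then `T` has singular compactness for `Δ`: every
`μ`-saturated model of `T`, for singular `μ > |T|`, realizes every `Δ`-type over a
parameter set of size `≤ μ`. -/
theorem singular_compactness_criterion
    {L : FirstOrder.Language.{u, u}} (T : L.Theory) (hT : T.IsComplete)
    (mx my : ℕ) (Δ : Set (L.Formula (Fin mx ⊕ Fin my)))
    (hcond : ∀ φ ∈ Δ, ∃ (mz : ℕ) (θ : L.Formula (Fin mx ⊕ Fin mz)),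
      ∀ (N : Type u) [inst : L.Structure N], N ⊨ T →
        ∀ (s t : ℕ) (r : Fin s → Fin my → N) (Av : Fin t → Fin mx → N),
          (∃ c : Fin mx → N, ∀ i, Formula.Realize φ (Sum.elim c (r i))) →
          (∀ j i, Formula.Realize φ (Sum.elim (Av j) (r i))) →
          ∃ b : Fin mz → N,
            (∀ j, Formula.Realize θ (Sum.elim (Av j) b)) ∧
            ∀ c : Fin mx → N, Formula.Realize θ (Sum.elim c b) →
              ∀ i, Formula.Realize φ (Sum.elim c (r i)))
    (μ : Cardinal.{u}) (hμinf : ℵ₀ ≤ μ) (hsing : μ.ord.cof < μ) (hμT : L.card + ℵ₀ < μ)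
    (N : Type u) [L.Structure N] (hN : N ⊨ T) (hsat : IsSaturatedModel L N μ)
    (A : Set N) (hA : #A ≤ μ)
    (p : Set ((L.Formula (Fin mx ⊕ Fin my)) × (Fin my → N)))
    (hpΔ : ∀ q ∈ p, q.1 ∈ Δ) (hparams : ∀ q ∈ p, ∀ i, q.2 i ∈ A)
    (hcons : ∀ F : Finset ((L.Formula (Fin mx ⊕ Fin my)) × (Fin my → N)), ↑F ⊆ p →
      ∃ c : Fin mx → N, ∀ q ∈ F, Formula.Realize q.1 (Sum.elim c q.2)) :
    ∃ c : Fin mx → N, ∀ q ∈ p, Formula.Realize q.1 (Sum.elim c q.2) :=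
  singular_compactness_criterion_general T mx my Δ hcond μ hsing hμT N hN hsat A hA p hpΔ hparams
    hcons

end ShredPaper
end
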